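/- arXiv:2412.14994 — 2 statements merged into one kernel-verified Lean document; each statement's English description precedes it below -/
import Mathlib

section
/- Let (X,d,μ) be a space of homogeneous type, 0 < p < 1 ≤ q ≤ ∞, and M a (p,q,T,λ)-approximate molecule associated to a ball B with Σ_{k≥1} λ_k < ∞. Then M defines a continuous linear functional on ℓ_{1/p−1,T}(X): if r_B < T, then |∫ M φ dμ| ≤ C (1 + Σ_{k≥1} λ_k) ‖φ‖_{ℓ_{1/p−1,T}} for all φ ∈ ℓ_{1/p−1,T}(X), with C an absolute constant (C = 4 works). -/
open MeasureTheory ENNReal Filter Topology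

noncomputable section

variable {X : Type*}

/-- Quasi-metric ball. -/
def hball (d : X → X → ℝ) (x : X) (r : ℝ) : Set X := {y | d x y < r}

/-- `(X,d,μ)` is a space of homogeneous type with quasi-triangle constant `A₀`,
doubling constant `A'` and upper dimension `γ`. -/
structure IsHomType [MeasurableSpace X] (d : X → X → ℝ) (μ : Measure X)
    (A₀ A' γ : ℝ) : Prop where
  A0_ge : 1 ≤ A₀
  A'_pos : 0 < A'
  gamma_pos : 0 < γ
  nonneg : ∀ x y, 0 ≤ d x y
  eq_zero : ∀ x y, d x y = 0 ↔ x = y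
  symm : ∀ x y, d x y = d y x
  tri : ∀ x y z, d x y ≤ A₀ * (d x z + d z y)
  meas : ∀ x r, MeasurableSet (hball d x r)
  pos : ∀ x r, 0 < r → 0 < μ (hball d x r)
  fin : ∀ x r, μ (hball d x r) < ⊤
  doubling : ∀ x r lam, 1 ≤ lam →
    μ (hball d x (lam * r)) ≤ ENNReal.ofReal (A' * lam ^ γ) * μ (hball d x r)

/-- `L` is an upper bound for all the local Lipschitz functionals `𝔑^B_{α,T}(φ)`,
i.e. an upper bound for the `ℓ_{α,T}` norm of `φ`. -/
def LipBound [MeasurableSpace X] (d : X → X → ℝ) (μ : Measure X) (α T : ℝ)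
    (φ : X → ℝ) (L : ℝ) : Prop :=
  ∀ x r, 0 < r →
    (r < T → ∀ y ∈ hball d x r, ∀ z ∈ hball d x r,
      |φ y - φ z| ≤ L * (μ (hball d x r)).toReal ^ α) ∧
    (T ≤ r → ∀ y ∈ hball d x r, |φ y| ≤ L * (μ (hball d x r)).toReal ^ α)

/-- A `(p,q,T)`-approximate atom. -/
def IsApproxAtom [MeasurableSpace X] (d : X → X → ℝ) (μ : Measure X)
    (p : ℝ) (q : ℝ≥0∞) (T : ℝ) (a : X → ℝ) : Prop :=
  ∃ (x_B : X) (r_B : ℝ), 0 < r_B ∧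
    (∀ x, a x ≠ 0 → x ∈ hball d x_B r_B) ∧
    eLpNorm a q μ ≤ μ (hball d x_B r_B) ^ (1/q.toReal - 1/p) ∧
    Integrable a μ ∧
    |∫ x, a x ∂μ| ≤ (μ (hball d x_B T)).toReal ^ (1 - 1/p)

/-! With `α = 1/p - 1` and `c = φ x_B`: the oscillation bound of `φ` on
`B_k = B(x_B, 2ᵏ r_B)` (or, once `2ᵏ r_B ≥ T`, its sup bound together with
`|c| ≤ L |B(x_B,T)|^α ≤ L |B_k|^α`) gives `|φ - c| ≤ 2L |B_k|^α` on `B_k`, which cancels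
exactly against Hölder's bound `∫_{A_k} |M| ≤ λ_k |B_k|^{-α}` on the annulus `A_k`
(with `λ_0 = 1`). Summing over the annuli gives `∫ |M| |φ - c| ≤ 2L (1 + Σ λ_k)`, and the
remaining term `c ∫ M` is at most `L` by the moment condition. -/

section Holder

variable {Ω : Type*} [MeasurableSpace Ω] {μ : Measure Ω} {q : ℝ≥0∞} {M : Ω → ℝ} {S B : Set Ω}
  {u c : ℝ}

lemma setIntegral_abs_le_of_eLpNorm_indicator_le (hq : 1 ≤ q) (hM : Integrable M μ)
    (hS : MeasurableSet S) (hSB : S ⊆ B) (hB0 : μ B ≠ 0) (hBt : μ B ≠ ⊤) (hc : 0 ≤ c)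
    (hbound : eLpNorm (S.indicator M) q μ ≤ ENNReal.ofReal c * μ B ^ (1 / q.toReal - u)) :
    ∫ x in S, |M x| ∂μ ≤ c * (μ B).toReal ^ (1 - u) := by
  have hL1 : eLpNorm M 1 (μ.restrict S) ≤ ENNReal.ofReal c * μ B ^ (1 - u) := by
    have hres : eLpNorm M 1 (μ.restrict S) = eLpNorm (S.indicator M) 1 (μ.restrict B) := by
      rw [eLpNorm_indicator_eq_eLpNorm_restrict hS, Measure.restrict_restrict hS,
        Set.inter_eq_left.mpr hSB]
    calc eLpNorm M 1 (μ.restrict S)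
        ≤ eLpNorm (S.indicator M) q (μ.restrict B) * μ B ^ (1 - 1 / q.toReal) := by
          simpa [hres] using eLpNorm_le_eLpNorm_mul_rpow_measure_univ hq
            (hM.aestronglyMeasurable.indicator hS).restrict
      _ ≤ ENNReal.ofReal c * μ B ^ (1 / q.toReal - u) * μ B ^ (1 - 1 / q.toReal) := by
          gcongr
          exact (eLpNorm_mono_measure _ Measure.restrict_le_self).trans hbound
      _ = ENNReal.ofReal c * μ B ^ (1 - u) := by
          rw [mul_assoc, ← ENNReal.rpow_add _ _ hB0 hBt]
          ring_nf
  have hfin : μ B ^ (1 - u) ≠ ⊤ := ENNReal.rpow_ne_top_of_ne_zero hB0 hBt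
  rw [eLpNorm_one_eq_lintegral_enorm, ← ofReal_integral_norm_eq_lintegral_enorm hM.restrict,
    ← ENNReal.ofReal_toReal hfin, ← ENNReal.ofReal_mul hc, ← ENNReal.toReal_rpow] at hL1
  simpa only [Real.norm_eq_abs] using
    (ENNReal.ofReal_le_ofReal_iff (by positivity)).1 hL1

lemma setIntegral_abs_mul_le_of_eLpNorm_indicator_le (hq : 1 ≤ q) (hM : Integrable M μ)
    (hS : MeasurableSet S) (hSB : S ⊆ B) (hB0 : μ B ≠ 0) (hBt : μ B ≠ ⊤) (hc : 0 ≤ c)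
    (hbound : eLpNorm (S.indicator M) q μ ≤ ENNReal.ofReal c * μ B ^ (1 / q.toReal - u))
    {ψ : Ω → ℝ} {K : ℝ} (hK : 0 ≤ K) (hψ : ∀ y ∈ B, |ψ y| ≤ K * (μ B).toReal ^ (u - 1)) :
    ∫ x in S, |M x * ψ x| ∂μ ≤ c * K := by
  have hmB : 0 < (μ B).toReal := ENNReal.toReal_pos hB0 hBt
  calc ∫ x in S, |M x * ψ x| ∂μ
      ≤ ∫ x in S, |M x| * (K * (μ B).toReal ^ (u - 1)) ∂μ := by
        refine integral_mono_of_nonneg (ae_of_all _ fun x => abs_nonneg _)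
          (hM.abs.mul_const _).restrict (ae_restrict_of_forall_mem hS fun x hx => ?_)
        simp only [abs_mul]
        exact mul_le_mul_of_nonneg_left (hψ x (hSB hx)) (abs_nonneg _)
    _ = (∫ x in S, |M x| ∂μ) * (K * (μ B).toReal ^ (u - 1)) := integral_mul_const _ _
    _ ≤ c * (μ B).toReal ^ (1 - u) * (K * (μ B).toReal ^ (u - 1)) := by
        gcongr
        exact setIntegral_abs_le_of_eLpNorm_indicator_le hq hM hS hSB hB0 hBt hc hbound
    _ = c * K := by
        rw [mul_mul_mul_comm, ← Real.rpow_add hmB]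
        simp

end Holder

lemma hasSum_setIntegral_disjointed {Ω E : Type*} [MeasurableSpace Ω] [NormedAddCommGroup E]
    [NormedSpace ℝ E] {μ : Measure Ω} {s : ℕ → Set Ω} (hs : ∀ k, MeasurableSet (s k))
    (hcover : ⋃ k, s k = Set.univ) {f : Ω → E} (hf : Integrable f μ) :
    HasSum (fun k => ∫ x in disjointed s k, f x ∂μ) (∫ x, f x ∂μ) := by
  have hunion : ⋃ k, disjointed s k = Set.univ := by rw [iUnion_disjointed, hcover]
  simpa [hunion] using hasSum_integral_iUnion (MeasurableSet.disjointed hs)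
    (disjoint_disjointed s) (hunion ▸ hf.integrableOn)

lemma integral_le_of_setIntegral_disjointed_le {Ω : Type*} [MeasurableSpace Ω] {μ : Measure Ω}
    {s : ℕ → Set Ω} (hs : ∀ k, MeasurableSet (s k)) (hcover : ⋃ k, s k = Set.univ)
    {f : Ω → ℝ} (hf : Integrable f μ) {b : ℕ → ℝ} (hb : Summable b) {C : ℝ}
    (h0 : ∫ x in disjointed s 0, f x ∂μ ≤ C)
    (hsucc : ∀ k, ∫ x in disjointed s (k + 1), f x ∂μ ≤ b k * C) :
    ∫ x, f x ∂μ ≤ C * (1 + ∑' k, b k) := by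
  have hsum := hasSum_setIntegral_disjointed hs hcover hf
  rw [← hsum.tsum_eq, hsum.summable.tsum_eq_zero_add, mul_add, mul_one, ← tsum_mul_left]
  exact add_le_add h0 <| (hsum.summable.comp_injective (add_left_injective 1)).tsum_le_tsum
    (fun k => (hsucc k).trans_eq (mul_comm _ _)) (hb.mul_left C)

lemma abs_mul_le_of_le_rpow {a b L m u : ℝ} (hm : 0 < m) (ha : |a| ≤ L * m ^ (u - 1))
    (hb : |b| ≤ m ^ (1 - u)) : |a * b| ≤ L := by
  have hL : 0 ≤ L := by
    by_contra! h
    linarith [abs_nonneg a, mul_neg_of_neg_of_pos h (Real.rpow_pos_of_pos hm (u - 1))]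
  calc |a * b| ≤ L * m ^ (u - 1) * m ^ (1 - u) := by rw [abs_mul]; gcongr
    _ = L := by rw [mul_assoc, ← Real.rpow_add hm]; simp

section Balls

variable {d : X → X → ℝ}

lemma mem_hball_self {x : X} {r : ℝ} (hx : d x x = 0) (hr : 0 < r) : x ∈ hball d x r := by
  simpa [hball, hx] using hr

lemma hball_mono {x : X} {r s : ℝ} (hrs : r ≤ s) : hball d x r ⊆ hball d x s :=
  fun _ hy => lt_of_lt_of_le hy hrs

lemma monotone_hball_two_pow_mul {x : X} {r : ℝ} (hr : 0 ≤ r) :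
    Monotone fun k : ℕ => hball d x (2 ^ k * r) :=
  fun _ _ hij => hball_mono (mul_le_mul_of_nonneg_right (pow_le_pow_right₀ one_le_two hij) hr)

lemma iUnion_hball_two_pow_mul {x : X} {r : ℝ} (hr : 0 < r) :
    ⋃ k : ℕ, hball d x (2 ^ k * r) = Set.univ := by
  refine Set.eq_univ_of_forall fun y => Set.mem_iUnion.2 ?_
  obtain ⟨k, hk⟩ := pow_unbounded_of_one_lt (d x y / r) (one_lt_two (α := ℝ))
  exact ⟨k, (div_lt_iff₀ hr).mp hk⟩

lemma LipBound.abs_sub_le [MeasurableSpace X] {μ : Measure X} {α T L : ℝ} {φ : X → ℝ}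
    (hφ : LipBound d μ α T φ L) (hα : 0 ≤ α) (hL : 0 ≤ L) (hT : 0 < T) {x : X} {r : ℝ}
    (hx : d x x = 0) (hr : 0 < r) (hfin : μ (hball d x r) ≠ ⊤) {y : X} (hy : y ∈ hball d x r) :
    |φ y - φ x| ≤ 2 * L * (μ (hball d x r)).toReal ^ α := by
  rcases lt_or_ge r T with hrT | hTr
  · have h := (hφ x r hr).1 hrT y hy x (mem_hball_self hx hr)
    nlinarith [Real.rpow_nonneg (μ (hball d x r)).toReal_nonneg α]
  · have hmono : (μ (hball d x T)).toReal ^ α ≤ (μ (hball d x r)).toReal ^ α :=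
      Real.rpow_le_rpow ENNReal.toReal_nonneg
        (ENNReal.toReal_mono hfin (measure_mono (hball_mono hTr))) hα
    have hy' := (hφ x r hr).2 hTr y hy
    have hx' := (hφ x T hT).2 le_rfl x (mem_hball_self hx hT)
    calc |φ y - φ x| ≤ |φ y| + |φ x| := abs_sub _ _
      _ ≤ L * (μ (hball d x r)).toReal ^ α + L * (μ (hball d x r)).toReal ^ α := by
          gcongr
          exact hx'.trans (mul_le_mul_of_nonneg_left hmono hL)
      _ = 2 * L * (μ (hball d x r)).toReal ^ α := by ring

end Balls

theorem stmt9_general [MeasurableSpace X] (d : X → X → ℝ) (μ : Measure X) (A₀ A' γ : ℝ)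
    (hX : IsHomType d μ A₀ A' γ) (p : ℝ) (hp : 0 < p) (hp1 : p < 1)
    (q : ℝ≥0∞) (hq : 1 ≤ q) (T : ℝ) (hT : 0 < T)
    (M : X → ℝ) (x_B : X) (r_B : ℝ) (hr : 0 < r_B)
    (lam : ℕ → ℝ) (hl0 : ∀ k, 0 ≤ lam k) (hlsum : Summable lam)
    (h1 : eLpNorm ((hball d x_B r_B).indicator M) q μ
        ≤ μ (hball d x_B r_B) ^ (1/q.toReal - 1/p))
    (h2 : ∀ k : ℕ,
      eLpNorm ((hball d x_B (2^(k+1) * r_B) \ hball d x_B (2^k * r_B)).indicator M) q μ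
        ≤ ENNReal.ofReal (lam (k+1)) * μ (hball d x_B (2^(k+1) * r_B)) ^ (1/q.toReal - 1/p))
    (hint : Integrable M μ)
    (hmom : |∫ x, M x ∂μ| ≤ (μ (hball d x_B T)).toReal ^ (1 - 1/p))
    (φ : X → ℝ) (L : ℝ) (hL : 0 ≤ L) (hφ : LipBound d μ (1/p - 1) T φ L)
    (hMφ : Integrable (fun x => M x * φ x) μ) :
    |∫ x, M x * φ x ∂μ| ≤ 4 * (1 + ∑' k : ℕ, lam (k+1)) * L := by
  set B : ℕ → Set X := fun k => hball d x_B (2 ^ k * r_B)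
  set c := φ x_B
  have hα : 0 ≤ 1 / p - 1 := sub_nonneg.2 ((one_le_div hp).2 hp1.le)
  have hxx : d x_B x_B = 0 := (hX.eq_zero _ _).2 rfl
  have hmono : Monotone B := monotone_hball_two_pow_mul hr.le
  have hpiece : ∀ k a, 0 ≤ a →
      eLpNorm ((disjointed B k).indicator M) q μ
        ≤ ENNReal.ofReal a * μ (B k) ^ (1 / q.toReal - 1 / p) →
      ∫ x in disjointed B k, |M x * (φ x - c)| ∂μ ≤ a * (2 * L) := fun k a ha hM =>
    setIntegral_abs_mul_le_of_eLpNorm_indicator_le hq hint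
      (MeasurableSet.disjointed (fun k => hX.meas _ _) k) (disjointed_le B k)
      (hX.pos _ _ (by positivity)).ne' (hX.fin _ _).ne ha hM (by positivity)
      fun _ hy => hφ.abs_sub_le hα hL hT hxx (by positivity) (hX.fin _ _).ne hy
  have hMφc : Integrable (fun x => M x * (φ x - c)) μ := by
    simpa only [mul_sub, Pi.sub_def] using hMφ.sub (hint.mul_const c)
  have hfar : ∫ x, |M x * (φ x - c)| ∂μ ≤ 2 * L * (1 + ∑' k, lam (k + 1)) :=
    integral_le_of_setIntegral_disjointed_le (fun k => hX.meas _ _) (iUnion_hball_two_pow_mul hr)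
      hMφc.abs ((summable_nat_add_iff 1).2 hlsum)
      ((hpiece 0 1 zero_le_one (by simpa [B] using h1)).trans_eq (one_mul _))
      fun k => hpiece (k + 1) _ (hl0 _) <| by rw [hmono.disjointed_add_one]; exact h2 k
  have hnear : |c * ∫ x, M x ∂μ| ≤ L :=
    abs_mul_le_of_le_rpow (ENNReal.toReal_pos (hX.pos _ _ hT).ne' (hX.fin _ _).ne)
      ((hφ x_B T hT).2 le_rfl x_B (mem_hball_self hxx hT)) hmom
  have hsplit : ∫ x, M x * φ x ∂μ = ∫ x, M x * (φ x - c) ∂μ + c * ∫ x, M x ∂μ := by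
    rw [← integral_const_mul, ← integral_add hMφc (hint.const_mul c)]
    congr 1; ext x; ring
  have hS : 0 ≤ ∑' k, lam (k + 1) := tsum_nonneg fun k => hl0 _
  calc |∫ x, M x * φ x ∂μ|
      ≤ ∫ x, |M x * (φ x - c)| ∂μ + |c * ∫ x, M x ∂μ| := by
        rw [hsplit]
        exact (abs_add_le _ _).trans (add_le_add_left abs_integral_le_integral_abs _)
    _ ≤ 4 * (1 + ∑' k : ℕ, lam (k+1)) * L := by nlinarith

/-- An approximate molecule defines a continuous linear functional on `ℓ_{1/p-1,T}(X)`. -/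
theorem stmt9 [MeasurableSpace X] (d : X → X → ℝ) (μ : Measure X) (A₀ A' γ : ℝ)
    (hX : IsHomType d μ A₀ A' γ) (p : ℝ) (hp : 0 < p) (hp1 : p < 1)
    (q : ℝ≥0∞) (hq : 1 ≤ q) (T : ℝ) (hT : 0 < T)
    (M : X → ℝ) (x_B : X) (r_B : ℝ) (hr : 0 < r_B) (hrT : r_B < T)
    (lam : ℕ → ℝ) (hl0 : ∀ k, 0 ≤ lam k) (hlsum : Summable lam)
    (h1 : eLpNorm ((hball d x_B r_B).indicator M) q μ
        ≤ μ (hball d x_B r_B) ^ (1/q.toReal - 1/p))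
    (h2 : ∀ k : ℕ,
      eLpNorm ((hball d x_B (2^(k+1) * r_B) \ hball d x_B (2^k * r_B)).indicator M) q μ
        ≤ ENNReal.ofReal (lam (k+1)) * μ (hball d x_B (2^(k+1) * r_B)) ^ (1/q.toReal - 1/p))
    (hint : Integrable M μ)
    (hmom : |∫ x, M x ∂μ| ≤ (μ (hball d x_B T)).toReal ^ (1 - 1/p))
    (φ : X → ℝ) (L : ℝ) (hL : 0 ≤ L) (hφ : LipBound d μ (1/p - 1) T φ L)
    (hMφ : Integrable (fun x => M x * φ x) μ) :
    |∫ x, M x * φ x ∂μ| ≤ 4 * (1 + ∑' k : ℕ, lam (k+1)) * L :=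
  stmt9_general d μ A₀ A' γ hX p hp hp1 q hq T hT M x_B r_B hr lam hl0 hlsum h1 h2 hint hmom φ L hL
    hφ hMφ
end
end

section
/- Let (X,d,μ) be a space of homogeneous type with upper dimension γ and φ ∈ 𝒢(β,θ) a test function of type (x₀,1,β,θ). For any ball B(x_B,r_B) with r_B ≥ 1 one has |φ(x)| ≤ C ‖φ‖_{𝒢(β,θ)} |B(x_B,r_B)|^{θ/γ} for all x ∈ B(x_B,r_B), with C independent of φ, x_B and r_B. Consequently, any φ ∈ 𝒢(β,β) lies in the local Lipschitz space ℓ_{β/γ,1}(X) with ‖φ‖_{ℓ_{β/γ,1}} ≤ C ‖φ‖_{𝒢(β,β)}. -/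
open MeasureTheory ENNReal Filter Topology

noncomputable section

variable {X : Type*}

/-- `Cφ` is an admissible constant for `φ` as a test function of type `(x₀,r,β,θ)`. -/
def TestFnBound [MeasurableSpace X] (d : X → X → ℝ) (μ : Measure X) (A₀ : ℝ)
    (x₀ : X) (r β θ : ℝ) (φ : X → ℝ) (Cφ : ℝ) : Prop :=
  (∀ x, |φ x| ≤ Cφ * ((μ (hball d x₀ r) + μ (hball d x₀ (d x₀ x))).toReal)⁻¹ *
      (r / (r + d x₀ x)) ^ θ) ∧
  (∀ x y, d x y ≤ (2*A₀)⁻¹ * (r + d x₀ x) →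
    |φ x - φ y| ≤ Cφ * ((μ (hball d x₀ r) + μ (hball d x₀ (d x₀ x))).toReal)⁻¹ *
      (d x y / (r + d x₀ x)) ^ β * (r / (r + d x₀ x)) ^ θ)

/-!
Write `m = μ(B(x₀,1))` and `u = 1 + d(x₀,x)`. For `x ∈ B(x_B,r)` the unit ball `B(x₀,1)` lies in
`B(x_B, λ r)` with `λ = 2A₀²u / min(r,1)`, so the doubling condition with upper dimension `γ` gives
`(min(r,1)/u)^γ ≲ μ(B(x_B,r))/m`. Together with the size condition `|φ(x)| ≲ m⁻¹ u^{-θ}` this is the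
bound on large balls. On a ball `B(x,r)` with `r < 1`, two points `y, z` either satisfy
`d(y,z) ≤ (2A₀)⁻¹(1 + d(x₀,y))`, and the regularity condition gives `|φ(y) - φ(z)| ≲ m⁻¹ (r/u)^β`,
or they are so far apart that `r/u ≳ 1` and the size condition at `y` and `z` suffices.
-/

lemma Real.rpow_le_rpow_div_of_rpow_le {a b γ θ : ℝ} (ha : 0 ≤ a) (hγ : 0 < γ) (hθ : 0 ≤ θ)
    (h : a ^ γ ≤ b) : a ^ θ ≤ b ^ (θ / γ) := by
  calc a ^ θ = (a ^ γ) ^ (θ / γ) := by rw [← Real.rpow_mul ha, mul_div_cancel₀ θ hγ.ne']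
    _ ≤ b ^ (θ / γ) := by gcongr

lemma ENNReal.inv_toReal_add_le {a b : ℝ≥0∞} (ha : 0 < a.toReal) (hb : b ≠ ⊤) :
    ((a + b).toReal)⁻¹ ≤ a.toReal⁻¹ :=
  inv_anti₀ ha <| ENNReal.toReal_mono (ENNReal.add_ne_top.2 ⟨(ENNReal.toReal_pos_iff.1 ha).2.ne, hb⟩)
    le_self_add

namespace IsHomType

variable [MeasurableSpace X] {d : X → X → ℝ} {μ : Measure X} {A₀ A' γ : ℝ}

lemma A0_pos (hX : IsHomType d μ A₀ A' γ) : 0 < A₀ :=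
  one_pos.trans_le hX.A0_ge

lemma hball_subset (hX : IsHomType d μ A₀ A' γ) {x x' : X} {r s : ℝ}
    (h : A₀ * (d x' x + r) ≤ s) : hball d x r ⊆ hball d x' s := by
  intro y (hy : d x y < r)
  show d x' y < s
  calc d x' y ≤ A₀ * (d x' x + d x y) := hX.tri x' y x
    _ < A₀ * (d x' x + r) := by gcongr; exact hX.A0_pos
    _ ≤ s := h

lemma toReal_measure_hball_pos (hX : IsHomType d μ A₀ A' γ) (x : X) {r : ℝ} (hr : 0 < r) :
    0 < (μ (hball d x r)).toReal :=
  ENNReal.toReal_pos (hX.pos x r hr).ne' (hX.fin x r).ne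

lemma toReal_measure_hball_le (hX : IsHomType d μ A₀ A' γ) {x x' : X} {r s lam : ℝ}
    (hlam : 1 ≤ lam) (h : A₀ * (d x' x + r) ≤ lam * s) :
    (μ (hball d x r)).toReal ≤ A' * lam ^ γ * (μ (hball d x' s)).toReal := by
  have hle : μ (hball d x r) ≤ ENNReal.ofReal (A' * lam ^ γ) * μ (hball d x' s) :=
    (measure_mono (hX.hball_subset h)).trans (hX.doubling x' s lam hlam)
  have hc : 0 ≤ A' * lam ^ γ := by
    have := hX.A'_pos
    positivity
  calc (μ (hball d x r)).toReal
      ≤ (ENNReal.ofReal (A' * lam ^ γ) * μ (hball d x' s)).toReal :=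
        ENNReal.toReal_mono (ENNReal.mul_ne_top ENNReal.ofReal_ne_top (hX.fin x' s).ne) hle
    _ = A' * lam ^ γ * (μ (hball d x' s)).toReal := by
        rw [ENNReal.toReal_mul, ENNReal.toReal_ofReal hc]

lemma toReal_measure_unit_hball_mul_le (hX : IsHomType d μ A₀ A' γ) (x₀ : X) {x x_B : X}
    {r : ℝ} (hr : 0 < r) (hx : x ∈ hball d x_B r) :
    (μ (hball d x₀ 1)).toReal * min r 1 ^ γ ≤
      A' * (2 * A₀ ^ 2) ^ γ * (1 + d x₀ x) ^ γ * (μ (hball d x_B r)).toReal := by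
  have hA₀ := hX.A0_ge
  have hx' : d x_B x < r := hx
  set ρ := min r 1
  set u := 1 + d x₀ x
  have hρ : 0 < ρ := lt_min hr one_pos
  have hu : 1 ≤ u := le_add_of_nonneg_right (hX.nonneg x₀ x)
  have hρr : ρ ≤ r := min_le_left r 1
  have hρ1 : ρ ≤ 1 := min_le_right r 1
  have hlam : 1 ≤ 2 * A₀ ^ 2 * u / ρ := by
    rw [le_div_iff₀ hρ]
    nlinarith
  have hdist : d x_B x₀ ≤ A₀ * (r + d x₀ x) := by
    calc d x_B x₀ ≤ A₀ * (d x_B x + d x x₀) := hX.tri x_B x₀ x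
      _ ≤ A₀ * (r + d x₀ x) := by rw [hX.symm x x₀]; gcongr
  have hsub : A₀ * (d x_B x₀ + 1) ≤ 2 * A₀ ^ 2 * u / ρ * r := by
    have hρsum : ρ * (r + u) ≤ 2 * u * r := by nlinarith
    rw [div_mul_eq_mul_div, le_div_iff₀ hρ]
    have hbase : A₀ * (d x_B x₀ + 1) ≤ A₀ ^ 2 * (r + u) := by
      nlinarith [mul_le_mul_of_nonneg_left hdist hX.A0_pos.le]
    calc A₀ * (d x_B x₀ + 1) * ρ ≤ A₀ ^ 2 * (r + u) * ρ := by gcongr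
      _ ≤ A₀ ^ 2 * (2 * u * r) := by
          rw [mul_assoc, mul_comm (r + u)]; gcongr
      _ = 2 * A₀ ^ 2 * u * r := by ring
  have hm := hX.toReal_measure_hball_le hlam hsub
  calc (μ (hball d x₀ 1)).toReal * ρ ^ γ
      ≤ A' * (2 * A₀ ^ 2 * u / ρ) ^ γ * (μ (hball d x_B r)).toReal * ρ ^ γ := by gcongr
    _ = A' * (2 * A₀ ^ 2) ^ γ * u ^ γ * (μ (hball d x_B r)).toReal * (ρ ^ γ / ρ ^ γ) := by
        rw [Real.div_rpow (by positivity) hρ.le, Real.mul_rpow (by positivity) (by linarith)]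
        ring
    _ = A' * (2 * A₀ ^ 2) ^ γ * u ^ γ * (μ (hball d x_B r)).toReal := by
        rw [div_self (Real.rpow_pos_of_pos hρ γ).ne', mul_one]

lemma min_div_rpow_le (hX : IsHomType d μ A₀ A' γ) (x₀ : X) {x x_B : X} {r θ : ℝ}
    (hr : 0 < r) (hx : x ∈ hball d x_B r) (hθ : 0 ≤ θ) :
    (min r 1 / (1 + d x₀ x)) ^ θ ≤
      (A' * (2 * A₀ ^ 2) ^ γ / (μ (hball d x₀ 1)).toReal) ^ (θ / γ) *
        (μ (hball d x_B r)).toReal ^ (θ / γ) := by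
  have hm := hX.toReal_measure_hball_pos x₀ one_pos
  have hu : 0 < 1 + d x₀ x := by linarith [hX.nonneg x₀ x]
  have hc : 0 ≤ A' * (2 * A₀ ^ 2) ^ γ := by
    have := hX.A'_pos
    positivity
  have hγ : (min r 1 / (1 + d x₀ x)) ^ γ ≤
      A' * (2 * A₀ ^ 2) ^ γ / (μ (hball d x₀ 1)).toReal * (μ (hball d x_B r)).toReal := by
    rw [Real.div_rpow (le_min hr.le zero_le_one) hu.le,
      div_le_iff₀ (Real.rpow_pos_of_pos hu γ), div_mul_eq_mul_div, div_mul_eq_mul_div,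
      le_div_iff₀ hm, mul_comm]
    linarith [hX.toReal_measure_unit_hball_mul_le x₀ hr hx]
  rw [← Real.mul_rpow (div_nonneg hc hm.le) ENNReal.toReal_nonneg]
  exact Real.rpow_le_rpow_div_of_rpow_le (by positivity) hX.gamma_pos hθ hγ

lemma le_two_mul_of_mem_hball (hX : IsHomType d μ A₀ A' γ) {x y z : X} {r : ℝ}
    (hy : y ∈ hball d x r) (hz : z ∈ hball d x r) : d y z ≤ 2 * A₀ * r := by
  have hy' : d x y < r := hy
  have hz' : d x z < r := hz
  calc d y z ≤ A₀ * (d y x + d x z) := hX.tri y z x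
    _ ≤ A₀ * (r + r) := by rw [hX.symm y x]; gcongr; linarith [hX.A0_pos]
    _ = 2 * A₀ * r := by ring

lemma one_add_le_of_mem_hball (hX : IsHomType d μ A₀ A' γ) (x₀ : X) {x y : X} {r : ℝ}
    (hr : r ≤ 1) (hy : y ∈ hball d x r) : 1 + d x₀ x ≤ 2 * A₀ * (1 + d x₀ y) := by
  have hy' : d x y < r := hy
  have := hX.tri x₀ x y
  rw [hX.symm y x] at this
  nlinarith [hX.A0_ge, hX.nonneg x₀ y]

lemma div_add_rpow_le_one (hX : IsHomType d μ A₀ A' γ) (x₀ x : X) {r θ : ℝ} (hr : 0 < r)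
    (hθ : 0 ≤ θ) : (r / (r + d x₀ x)) ^ θ ≤ 1 := by
  have := hX.nonneg x₀ x
  exact Real.rpow_le_one (by positivity) ((div_le_one (by positivity)).2 (by linarith)) hθ

end IsHomType

namespace TestFnBound

variable [MeasurableSpace X] {d : X → X → ℝ} {μ : Measure X} {A₀ A' γ : ℝ} {x₀ : X}
  {r β θ : ℝ} {φ : X → ℝ} {Cφ : ℝ}

lemma abs_le (hX : IsHomType d μ A₀ A' γ) (hφ : TestFnBound d μ A₀ x₀ r β θ φ Cφ)
    (hr : 0 < r) (hCφ : 0 ≤ Cφ) (x : X) :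
    |φ x| ≤ Cφ * ((μ (hball d x₀ r)).toReal)⁻¹ * (r / (r + d x₀ x)) ^ θ := by
  have := hX.nonneg x₀ x
  refine (hφ.1 x).trans ?_
  gcongr Cφ * ?_ * _
  exact ENNReal.inv_toReal_add_le (hX.toReal_measure_hball_pos x₀ hr) (hX.fin _ _).ne

lemma abs_le_mul_inv (hX : IsHomType d μ A₀ A' γ) (hφ : TestFnBound d μ A₀ x₀ r β θ φ Cφ)
    (hr : 0 < r) (hCφ : 0 ≤ Cφ) (hθ : 0 ≤ θ) (x : X) :
    |φ x| ≤ Cφ * ((μ (hball d x₀ r)).toReal)⁻¹ := by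
  calc |φ x| ≤ Cφ * ((μ (hball d x₀ r)).toReal)⁻¹ * (r / (r + d x₀ x)) ^ θ :=
        hφ.abs_le hX hr hCφ x
    _ ≤ Cφ * ((μ (hball d x₀ r)).toReal)⁻¹ * 1 := by
        gcongr
        exact hX.div_add_rpow_le_one x₀ x hr hθ
    _ = Cφ * ((μ (hball d x₀ r)).toReal)⁻¹ := mul_one _

lemma abs_sub_le (hX : IsHomType d μ A₀ A' γ) (hφ : TestFnBound d μ A₀ x₀ r β θ φ Cφ)
    (hr : 0 < r) (hCφ : 0 ≤ Cφ) (hθ : 0 ≤ θ) {x y : X}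
    (hxy : d x y ≤ (2 * A₀)⁻¹ * (r + d x₀ x)) :
    |φ x - φ y| ≤ Cφ * ((μ (hball d x₀ r)).toReal)⁻¹ * (d x y / (r + d x₀ x)) ^ β := by
  have := hX.nonneg x₀ x
  have := hX.nonneg x y
  calc |φ x - φ y| ≤ Cφ * ((μ (hball d x₀ r)).toReal)⁻¹ * (d x y / (r + d x₀ x)) ^ β *
        (r / (r + d x₀ x)) ^ θ := by
        refine (hφ.2 x y hxy).trans ?_
        gcongr Cφ * ?_ * _ * _
        exact ENNReal.inv_toReal_add_le (hX.toReal_measure_hball_pos x₀ hr) (hX.fin _ _).ne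
    _ ≤ Cφ * ((μ (hball d x₀ r)).toReal)⁻¹ * (d x y / (r + d x₀ x)) ^ β * 1 := by
        gcongr
        exact hX.div_add_rpow_le_one x₀ x hr hθ
    _ = Cφ * ((μ (hball d x₀ r)).toReal)⁻¹ * (d x y / (r + d x₀ x)) ^ β := mul_one _

lemma abs_sub_le_of_mem_hball (hX : IsHomType d μ A₀ A' γ)
    (hφ : TestFnBound d μ A₀ x₀ 1 β θ φ Cφ) (hCφ : 0 ≤ Cφ) (hβ : 0 ≤ β) (hθ : 0 ≤ θ)
    {x y z : X} {r : ℝ} (hr : r ≤ 1) (hy : y ∈ hball d x r) (hz : z ∈ hball d x r) :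
    |φ y - φ z| ≤
      2 * Cφ * ((μ (hball d x₀ 1)).toReal)⁻¹ * (8 * A₀ ^ 3 * (r / (1 + d x₀ x))) ^ β := by
  have hA₀ := hX.A0_ge
  have hu : 0 < 1 + d x₀ x := by linarith [hX.nonneg x₀ x]
  have hv : 0 < 1 + d x₀ y := by linarith [hX.nonneg x₀ y]
  have hyz := hX.le_two_mul_of_mem_hball hy hz
  have huv := hX.one_add_le_of_mem_hball x₀ hr hy
  have hr0 : 0 ≤ r := (hX.nonneg x y).trans hy.le
  by_cases hclose : d y z ≤ (2 * A₀)⁻¹ * (1 + d x₀ y)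
  · have hratio : d y z / (1 + d x₀ y) ≤ 8 * A₀ ^ 3 * (r / (1 + d x₀ x)) := by
      rw [mul_div_assoc', div_le_div_iff₀ hv hu]
      calc d y z * (1 + d x₀ x) ≤ 2 * A₀ * r * (2 * A₀ * (1 + d x₀ y)) := by gcongr
        _ = 4 * A₀ ^ 2 * (r * (1 + d x₀ y)) := by ring
        _ ≤ 8 * A₀ ^ 3 * (r * (1 + d x₀ y)) := by gcongr ?_ * _; nlinarith
        _ = 8 * A₀ ^ 3 * r * (1 + d x₀ y) := by ring
    calc |φ y - φ z| ≤ Cφ * ((μ (hball d x₀ 1)).toReal)⁻¹ * (d y z / (1 + d x₀ y)) ^ β :=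
          hφ.abs_sub_le hX one_pos hCφ hθ hclose
      _ ≤ Cφ * ((μ (hball d x₀ 1)).toReal)⁻¹ * (8 * A₀ ^ 3 * (r / (1 + d x₀ x))) ^ β := by
          have := hX.nonneg y z
          gcongr
      _ ≤ 2 * Cφ * ((μ (hball d x₀ 1)).toReal)⁻¹ * (8 * A₀ ^ 3 * (r / (1 + d x₀ x))) ^ β := by
          have : 0 ≤ Cφ * ((μ (hball d x₀ 1)).toReal)⁻¹ *
              (8 * A₀ ^ 3 * (r / (1 + d x₀ x))) ^ β := by positivity
          linarith
  · have hfar : 1 + d x₀ y < 2 * A₀ * d y z := by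
      push Not at hclose
      rwa [inv_mul_lt_iff₀ (by positivity)] at hclose
    have hone : 1 ≤ 8 * A₀ ^ 3 * (r / (1 + d x₀ x)) := by
      rw [mul_div_assoc', le_div_iff₀ hu, one_mul]
      calc 1 + d x₀ x ≤ 2 * A₀ * (1 + d x₀ y) := huv
        _ ≤ 2 * A₀ * (2 * A₀ * d y z) := by gcongr
        _ ≤ 2 * A₀ * (2 * A₀ * (2 * A₀ * r)) := by gcongr
        _ = 8 * A₀ ^ 3 * r := by ring
    calc |φ y - φ z| ≤ |φ y| + |φ z| := abs_sub _ _
      _ ≤ Cφ * ((μ (hball d x₀ 1)).toReal)⁻¹ + Cφ * ((μ (hball d x₀ 1)).toReal)⁻¹ :=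
          add_le_add (hφ.abs_le_mul_inv hX one_pos hCφ hθ y) (hφ.abs_le_mul_inv hX one_pos hCφ hθ z)
      _ = 2 * Cφ * ((μ (hball d x₀ 1)).toReal)⁻¹ * 1 := by ring
      _ ≤ 2 * Cφ * ((μ (hball d x₀ 1)).toReal)⁻¹ * (8 * A₀ ^ 3 * (r / (1 + d x₀ x))) ^ β := by
          gcongr
          exact Real.one_le_rpow hone hβ

lemma abs_le_rpow_measure (hX : IsHomType d μ A₀ A' γ) (hφ : TestFnBound d μ A₀ x₀ 1 β θ φ Cφ)
    (hCφ : 0 ≤ Cφ) (hθ : 0 ≤ θ) {x x_B : X} {r : ℝ} (hr : 1 ≤ r) (hx : x ∈ hball d x_B r) :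
    |φ x| ≤ ((μ (hball d x₀ 1)).toReal)⁻¹ *
        (A' * (2 * A₀ ^ 2) ^ γ / (μ (hball d x₀ 1)).toReal) ^ (θ / γ) * Cφ *
        (μ (hball d x_B r)).toReal ^ (θ / γ) := by
  have hdecay := hX.min_div_rpow_le x₀ (one_pos.trans_le hr) hx hθ
  rw [min_eq_right hr] at hdecay
  calc |φ x| ≤ Cφ * ((μ (hball d x₀ 1)).toReal)⁻¹ * (1 / (1 + d x₀ x)) ^ θ :=
        hφ.abs_le hX one_pos hCφ x
    _ ≤ Cφ * ((μ (hball d x₀ 1)).toReal)⁻¹ *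
        ((A' * (2 * A₀ ^ 2) ^ γ / (μ (hball d x₀ 1)).toReal) ^ (θ / γ) *
          (μ (hball d x_B r)).toReal ^ (θ / γ)) := by gcongr
    _ = _ := by ring

lemma abs_sub_le_rpow_measure (hX : IsHomType d μ A₀ A' γ)
    (hφ : TestFnBound d μ A₀ x₀ 1 β θ φ Cφ) (hCφ : 0 ≤ Cφ) (hβ : 0 ≤ β) (hθ : 0 ≤ θ)
    {x y z : X} {r : ℝ} (hr : 0 < r) (hr1 : r ≤ 1) (hy : y ∈ hball d x r)
    (hz : z ∈ hball d x r) :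
    |φ y - φ z| ≤ 2 * (8 * A₀ ^ 3) ^ β * (((μ (hball d x₀ 1)).toReal)⁻¹ *
        (A' * (2 * A₀ ^ 2) ^ γ / (μ (hball d x₀ 1)).toReal) ^ (β / γ)) * Cφ *
        (μ (hball d x r)).toReal ^ (β / γ) := by
  have hx : x ∈ hball d x r := show d x x < r by rw [(hX.eq_zero x x).2 rfl]; exact hr
  have hdecay := hX.min_div_rpow_le x₀ hr hx hβ
  rw [min_eq_left hr1] at hdecay
  have hu : 0 < 1 + d x₀ x := by linarith [hX.nonneg x₀ x]
  have hA₀ := hX.A0_pos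
  calc |φ y - φ z| ≤ 2 * Cφ * ((μ (hball d x₀ 1)).toReal)⁻¹ *
        (8 * A₀ ^ 3 * (r / (1 + d x₀ x))) ^ β :=
        hφ.abs_sub_le_of_mem_hball hX hCφ hβ hθ hr1 hy hz
    _ = 2 * (8 * A₀ ^ 3) ^ β * Cφ * ((μ (hball d x₀ 1)).toReal)⁻¹ *
        (r / (1 + d x₀ x)) ^ β := by
        rw [Real.mul_rpow (by positivity) (by positivity)]; ring
    _ ≤ 2 * (8 * A₀ ^ 3) ^ β * Cφ * ((μ (hball d x₀ 1)).toReal)⁻¹ *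
        ((A' * (2 * A₀ ^ 2) ^ γ / (μ (hball d x₀ 1)).toReal) ^ (β / γ) *
          (μ (hball d x r)).toReal ^ (β / γ)) := by gcongr
    _ = _ := by ring

end TestFnBound

theorem stmt13_general [MeasurableSpace X] (d : X → X → ℝ) (μ : Measure X) (A₀ A' γ : ℝ)
    (hX : IsHomType d μ A₀ A' γ) (x₀ : X) (β θ : ℝ)
    (hθ : 0 < θ) :
    ∃ C : ℝ, 0 < C ∧ ∀ (φ : X → ℝ) (Cφ : ℝ), 0 ≤ Cφ →
      TestFnBound d μ A₀ x₀ 1 β θ φ Cφ →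
      (∀ (x_B : X) (r_B : ℝ), 1 ≤ r_B → ∀ x ∈ hball d x_B r_B,
          |φ x| ≤ C * Cφ * (μ (hball d x_B r_B)).toReal ^ (θ/γ)) ∧
      (θ = β → LipBound d μ (β/γ) 1 φ (C * Cφ)) := by
  set K := ((μ (hball d x₀ 1)).toReal)⁻¹ *
    (A' * (2 * A₀ ^ 2) ^ γ / (μ (hball d x₀ 1)).toReal) ^ (θ / γ)
  have hm := hX.toReal_measure_hball_pos x₀ one_pos
  have hK : 0 < K := by
    have := hX.A'_pos
    have := hX.A0_pos
    positivity
  have hL : 0 ≤ 2 * (8 * A₀ ^ 3) ^ θ := by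
    have := hX.A0_pos
    positivity
  refine ⟨(1 + 2 * (8 * A₀ ^ 3) ^ θ) * K, by positivity, fun φ Cφ hCφ hφ => ?_⟩
  have hsize : ∀ (x_B : X) (r_B : ℝ), 1 ≤ r_B → ∀ x ∈ hball d x_B r_B,
      |φ x| ≤ (1 + 2 * (8 * A₀ ^ 3) ^ θ) * K * Cφ * (μ (hball d x_B r_B)).toReal ^ (θ/γ) :=
    fun x_B r_B hr x hx => (hφ.abs_le_rpow_measure hX hCφ hθ.le hr hx).trans <| by
      gcongr ?_ * _ * _
      exact le_mul_of_one_le_left hK.le (by linarith)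
  refine ⟨hsize, ?_⟩
  rintro rfl x r hr
  refine ⟨fun hr1 y hy z hz => ?_, fun hr1 => hsize x r hr1⟩
  exact (hφ.abs_sub_le_rpow_measure hX hCφ hθ.le hθ.le hr hr1.le hy hz).trans
    (by gcongr; linarith)

/-- Size estimate for test functions on large balls, and the resulting embedding
`𝒢(β,β) ⊆ ℓ_{β/γ,1}(X)`. -/
theorem stmt13 [MeasurableSpace X] (d : X → X → ℝ) (μ : Measure X) (A₀ A' γ : ℝ)
    (hX : IsHomType d μ A₀ A' γ) (x₀ : X) (β θ : ℝ)
    (hβ : 0 < β) (hβ1 : β ≤ 1) (hθ : 0 < θ) :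
    ∃ C : ℝ, 0 < C ∧ ∀ (φ : X → ℝ) (Cφ : ℝ), 0 ≤ Cφ →
      TestFnBound d μ A₀ x₀ 1 β θ φ Cφ →
      (∀ (x_B : X) (r_B : ℝ), 1 ≤ r_B → ∀ x ∈ hball d x_B r_B,
          |φ x| ≤ C * Cφ * (μ (hball d x_B r_B)).toReal ^ (θ/γ)) ∧
      (θ = β → LipBound d μ (β/γ) 1 φ (C * Cφ)) :=
  stmt13_general d μ A₀ A' γ hX x₀ β θ hθ
end
end
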